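/- Let n be a positive integer, c a positive integer, and A ⊆ {0,1}^n with |A| ≥ 2^{n−c}. Then for every y ∈ {0,1}^n and every integer q with 1 ≤ q ≤ c, ∑_{x ∈ {0,1}^n, |x ⊕ y| = q} f̃(x)² ≤ (4c/q)^q, where x ⊕ y denotes the coordinatewise XOR. -/

import Mathlib

open scoped Classical
open Finset

noncomputable section

/-- The sign `(-1)^{z·x}` where `z·x = ∑ i, z i * x i` over `{0,1}^n`. -/
def chi {n : ℕ} (z x : Fin n → Bool) : ℝ :=
  (-1 : ℝ) ^ (Finset.univ.filter (fun i => z i = true ∧ x i = true)).card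

/-- Hamming weight of `z ∈ {0,1}^n`. -/
def hw {n : ℕ} (z : Fin n → Bool) : ℕ :=
  (Finset.univ.filter (fun i => z i = true)).card

lemma chi_eq_prod {n : ℕ} (z x : Fin n → Bool) :
    chi z x = ∏ i : Fin n, (if z i = true ∧ x i = true then (-1 : ℝ) else 1) := by
  rw [chi, Finset.card_filter, ← Finset.prod_pow_eq_pow_sum]
  refine Finset.prod_congr rfl fun i _ => ?_
  by_cases h : z i = true ∧ x i = true <;> simp [h]

lemma hw_eq_sum {n : ℕ} (z : Fin n → Bool) :
    hw z = ∑ i : Fin n, (if z i = true then 1 else 0) := by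
  rw [hw, Finset.card_filter]

lemma chi_mul_chi {n : ℕ} (z w x : Fin n → Bool) :
    chi z x * chi w x = chi (fun i => xor (z i) (w i)) x := by
  rw [chi_eq_prod, chi_eq_prod, chi_eq_prod, ← Finset.prod_mul_distrib]
  refine Finset.prod_congr rfl fun i _ => ?_
  cases hz : z i <;> cases hw : w i <;> cases hx : x i <;> simp

lemma chi_sq {n : ℕ} (z x : Fin n → Bool) : chi z x ^ 2 = 1 := by
  rw [chi, ← pow_mul, mul_comm, pow_mul]
  simp

lemma sum_cube_succ {n : ℕ} (F : (Fin (n+1) → Bool) → ℝ) :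
    ∑ x, F x = ∑ x : Fin n → Bool, (F (Fin.cons false x) + F (Fin.cons true x)) := by
  rw [← (Fin.consEquiv (fun _ : Fin (n+1) => Bool)).sum_comp F]
  rw [Fintype.sum_prod_type, Fintype.sum_bool, ← Finset.sum_add_distrib]
  refine Finset.sum_congr rfl fun x _ => ?_
  rw [add_comm]
  rfl

lemma chi_cons {n : ℕ} (zb b : Bool) (z x : Fin n → Bool) :
    chi (Fin.cons zb z) (Fin.cons b x) =
      (if zb = true ∧ b = true then (-1:ℝ) else 1) * chi z x := by
  rw [chi_eq_prod, chi_eq_prod, Fin.prod_univ_succ]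
  simp

lemma hw_cons {n : ℕ} (zb : Bool) (z : Fin n → Bool) :
    hw (Fin.cons zb z) = (if zb = true then 1 else 0) + hw z := by
  rw [hw_eq_sum, hw_eq_sum, Fin.sum_univ_succ]
  simp

lemma cons_eq_const_false {n : ℕ} (zb : Bool) (z : Fin n → Bool) :
    Fin.cons zb z = (fun _ => false) ↔ zb = false ∧ z = (fun _ => false) := by
  constructor
  · intro h
    refine ⟨by simpa using congrFun h 0, funext fun i => by simpa using congrFun h i.succ⟩
  · rintro ⟨rfl, rfl⟩
    funext i
    refine Fin.cases ?_ (fun j => ?_) i <;> simp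

lemma sum_chi {n : ℕ} (z : Fin n → Bool) :
    ∑ x, chi z x = if z = (fun _ => false) then (2:ℝ)^n else 0 := by
  induction n with
  | zero => simp [chi, Finset.filter_eq_empty_iff, funext_iff]
  | succ n ih =>
    rw [sum_cube_succ]
    have hz : z = Fin.cons (z 0) (Fin.tail z) := (Fin.cons_self_tail z).symm
    rw [hz]
    simp only [chi_cons]
    rw [Finset.sum_add_distrib, ← Finset.mul_sum, ← Finset.mul_sum, ih]
    simp only [cons_eq_const_false]
    cases h0 : z 0
    · by_cases ht : Fin.tail z = (fun _ => false) <;> simp [ht] <;> ring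
    · by_cases ht : Fin.tail z = (fun _ => false) <;> simp [ht] <;> ring

lemma sum_chi_mul_chi {n : ℕ} (z w : Fin n → Bool) :
    ∑ x, chi z x * chi w x = if z = w then (2:ℝ)^n else 0 := by
  simp only [chi_mul_chi, sum_chi]
  congr 1
  simp only [eq_iff_iff]
  constructor
  · intro h
    funext i
    have := congrFun h i
    simp only [xor] at this
    cases hz : z i <;> cases hww : w i <;> simp [hz, hww] at this ⊢
  · intro h; subst h; funext i; simp

def Deg : (n : ℕ) → ((Fin n → Bool) → ℝ) → ℕ → Prop
  | 0, _, _ => True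
  | n+1, g, d => ∃ g0 g1 : (Fin n → Bool) → ℝ, Deg n g0 d ∧
      ((d = 0 ∧ g1 = fun _ => 0) ∨ ∃ d', d = d' + 1 ∧ Deg n g1 d') ∧
      ∀ b x, g (Fin.cons b x) = g0 x + (if b = true then -1 else 1) * g1 x

lemma deg_zero : ∀ (n d : ℕ), Deg n (fun _ => 0) d := by
  intro n
  induction n with
  | zero => intro d; trivial
  | succ n ih =>
    intro d
    refine ⟨(fun _ => 0), (fun _ => 0), ih d, ?_, by intros; simp⟩
    rcases d with _ | d'
    · exact Or.inl ⟨rfl, rfl⟩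
    · exact Or.inr ⟨d', rfl, ih d'⟩

lemma deg_add : ∀ (n : ℕ) (g h : (Fin n → Bool) → ℝ) (d : ℕ),
    Deg n g d → Deg n h d → Deg n (fun x => g x + h x) d := by
  intro n
  induction n with
  | zero => intros; trivial
  | succ n ih =>
    rintro g h d ⟨g0, g1, hg0, hg1, hgx⟩ ⟨h0, h1, hh0, hh1, hhx⟩
    refine ⟨(fun x => g0 x + h0 x), (fun x => g1 x + h1 x), ih _ _ _ hg0 hh0, ?_, ?_⟩
    · rcases hg1 with ⟨rfl, rfl⟩ | ⟨d', rfl, hd'⟩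
      · rcases hh1 with ⟨-, rfl⟩ | ⟨d', hd', -⟩
        · exact Or.inl ⟨rfl, by funext x; simp⟩
        · omega
      · rcases hh1 with ⟨h0eq, -⟩ | ⟨d'', hd'', hdeg⟩
        · omega
        · have : d' = d'' := by omega
          subst this
          exact Or.inr ⟨d', rfl, ih _ _ _ hd' hdeg⟩
    · intro b x
      simp only [hgx, hhx]
      ring

lemma deg_smul : ∀ (n : ℕ) (c : ℝ) (g : (Fin n → Bool) → ℝ) (d : ℕ),
    Deg n g d → Deg n (fun x => c * g x) d := by
  intro n
  induction n with
  | zero => intros; trivial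
  | succ n ih =>
    rintro c g d ⟨g0, g1, hg0, hg1, hgx⟩
    refine ⟨(fun x => c * g0 x), (fun x => c * g1 x), ih _ _ _ hg0, ?_, ?_⟩
    · rcases hg1 with ⟨rfl, rfl⟩ | ⟨d', rfl, hd'⟩
      · exact Or.inl ⟨rfl, by funext x; simp⟩
      · exact Or.inr ⟨d', rfl, ih _ _ _ hd'⟩
    · intro b x
      simp only [hgx]
      ring

lemma deg_mono : ∀ (n : ℕ) (g : (Fin n → Bool) → ℝ) (d d' : ℕ),
    Deg n g d → d ≤ d' → Deg n g d' := by
  intro n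
  induction n with
  | zero => intros; trivial
  | succ n ih =>
    rintro g d d' ⟨g0, g1, hg0, hg1, hgx⟩ hdd
    refine ⟨g0, g1, ih _ _ _ hg0 hdd, ?_, hgx⟩
    rcases hg1 with ⟨rfl, rfl⟩ | ⟨e, rfl, he⟩
    · rcases Nat.eq_zero_or_pos d' with rfl | hd'
      · exact Or.inl ⟨rfl, rfl⟩
      · exact Or.inr ⟨d' - 1, by omega, deg_zero _ _⟩
    · exact Or.inr ⟨d' - 1, by omega, ih _ _ _ he (by omega)⟩

lemma deg_sum {n : ℕ} {ι : Type*} (s : Finset ι) (f : ι → (Fin n → Bool) → ℝ) (d : ℕ)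
    (h : ∀ i ∈ s, Deg n (f i) d) : Deg n (fun x => ∑ i ∈ s, f i x) d := by
  induction s using Finset.induction with
  | empty => simpa using deg_zero n d
  | insert _ _ hns ih =>
    rename_i a s
    simp only [Finset.sum_insert hns]
    exact deg_add _ _ _ _ (h a (Finset.mem_insert_self a s))
      (ih fun i hi => h i (Finset.mem_insert_of_mem hi))

lemma deg_chi : ∀ (n : ℕ) (z : Fin n → Bool), Deg n (chi z) (hw z) := by
  intro n
  induction n with
  | zero => intros; trivial
  | succ n ih =>
    intro z
    have hz : z = Fin.cons (z 0) (Fin.tail z) := (Fin.cons_self_tail z).symm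
    have hwz : hw z = (if z 0 = true then 1 else 0) + hw (Fin.tail z) := by
      rw [hz]; rw [hw_cons]; rw [← hz]
    cases h0 : z 0
    · refine ⟨chi (Fin.tail z), (fun _ => 0), ?_, ?_, ?_⟩
      · have : hw z = hw (Fin.tail z) := by rw [hwz, h0]; simp
        rw [this]; exact ih _
      · rcases Nat.eq_zero_or_pos (hw z) with he | hp
        · exact Or.inl ⟨he, rfl⟩
        · exact Or.inr ⟨hw z - 1, by omega, deg_zero _ _⟩
      · intro b x
        conv_lhs => rw [hz, h0, chi_cons]
        simp
    · refine ⟨(fun _ => 0), chi (Fin.tail z), deg_zero _ _, ?_, ?_⟩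
      · refine Or.inr ⟨hw (Fin.tail z), by rw [hwz, h0]; simp [Nat.add_comm], ih _⟩
      · intro b x
        conv_lhs => rw [hz, h0, chi_cons]
        cases b <;> simp


-- ℕ binomial lemma: C(2k, 2j) ≤ C(k,j) * (2k-1)^j
lemma choose_two_mul_le (k : ℕ) : ∀ j, j ≤ k →
    Nat.choose (2*k) (2*j) ≤ Nat.choose k j * (2*k-1)^j := by
  intro j
  induction j with
  | zero => simp
  | succ j ih =>
    intro hj
    have hjk : j < k := hj
    have IH := ih hjk.le
    have h1 : Nat.choose (2*k) (2*j+1) * (2*j+1) = Nat.choose (2*k) (2*j) * (2*k - 2*j) :=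
      Nat.choose_succ_right_eq (2*k) (2*j)
    have h2 : Nat.choose (2*k) (2*j+2) * (2*j+2) = Nat.choose (2*k) (2*j+1) * (2*k - (2*j+1)) :=
      Nat.choose_succ_right_eq (2*k) (2*j+1)
    have h3 : Nat.choose k (j+1) * (j+1) = Nat.choose k j * (k - j) :=
      Nat.choose_succ_right_eq k j
    have hpos : 0 < (2*j+1) * (2*j+2) := by positivity
    refine Nat.le_of_mul_le_mul_right ?_ hpos
    have e1 : Nat.choose (2*k) (2*(j+1)) * ((2*j+1) * (2*j+2))
        = Nat.choose (2*k) (2*j) * ((2*k - 2*j) * (2*k - (2*j+1))) := by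
      have : 2*(j+1) = 2*j+2 := by ring
      rw [this]
      calc Nat.choose (2*k) (2*j+2) * ((2*j+1) * (2*j+2))
          = (Nat.choose (2*k) (2*j+2) * (2*j+2)) * (2*j+1) := by ring
        _ = (Nat.choose (2*k) (2*j+1) * (2*k - (2*j+1))) * (2*j+1) := by rw [h2]
        _ = (Nat.choose (2*k) (2*j+1) * (2*j+1)) * (2*k - (2*j+1)) := by ring
        _ = (Nat.choose (2*k) (2*j) * (2*k - 2*j)) * (2*k - (2*j+1)) := by rw [h1]
        _ = _ := by ring
    rw [e1]
    have e2 : Nat.choose k (j+1) * (2*k-1)^(j+1) * ((2*j+1) * (2*j+2))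
        = Nat.choose k j * (k - j) * (2*k-1)^j * ((2*k-1) * (2 * (2*j+1))) := by
      calc Nat.choose k (j+1) * (2*k-1)^(j+1) * ((2*j+1) * (2*j+2))
          = (Nat.choose k (j+1) * (j+1)) * ((2*k-1)^j * ((2*k-1) * (2 * (2*j+1)))) := by ring
        _ = (Nat.choose k j * (k - j)) * ((2*k-1)^j * ((2*k-1) * (2 * (2*j+1)))) := by rw [h3]
        _ = _ := by ring
    rw [e2]
    calc Nat.choose (2*k) (2*j) * ((2*k - 2*j) * (2*k - (2*j+1)))
        ≤ (Nat.choose k j * (2*k-1)^j) * ((2*k - 2*j) * (2*k - (2*j+1))) :=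
          Nat.mul_le_mul_right _ IH
      _ ≤ Nat.choose k j * (k - j) * (2*k-1)^j * ((2*k-1) * (2 * (2*j+1))) := by
          have hA : 2*k - 2*j = 2 * (k - j) := by omega
          have hB : 2*k - (2*j+1) ≤ (2*k-1) * (2*j+1) := by
            have : 2*k - (2*j+1) ≤ 2*k-1 := by omega
            calc 2*k - (2*j+1) ≤ 2*k-1 := this
              _ ≤ (2*k-1) * (2*j+1) := Nat.le_mul_of_pos_right _ (by omega)
          calc (Nat.choose k j * (2*k-1)^j) * ((2*k - 2*j) * (2*k - (2*j+1)))
              ≤ (Nat.choose k j * (2*k-1)^j) * ((2 * (k-j)) * ((2*k-1) * (2*j+1))) := by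
                rw [hA]
                exact Nat.mul_le_mul_left _ (Nat.mul_le_mul_left _ hB)
            _ = Nat.choose k j * (k - j) * (2*k-1)^j * ((2*k-1) * (2 * (2*j+1))) := by ring

-- sum over even indices
lemma sum_even_range (k : ℕ) (F : ℕ → ℝ) :
    ∑ i ∈ range (2*k+1), (if Even i then F i else 0) = ∑ j ∈ range (k+1), F (2*j) := by
  induction k with
  | zero => simp
  | succ k ih =>
    have h2 : 2*(k+1)+1 = (2*k+1) + 1 + 1 := by ring
    rw [h2, Finset.sum_range_succ, Finset.sum_range_succ, ih, Finset.sum_range_succ]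
    have ho : ¬ Even (2*k+1) := by simp [Nat.even_add_one, Nat.even_mul]
    have he : Even (2*k+1+1) := by simp [Nat.even_add_one, ho]
    rw [if_neg ho, if_pos he]
    have : 2*k+1+1 = 2*(k+1) := by ring
    rw [this, Finset.sum_range_succ (fun x => F (2*x)) (k+1), Finset.sum_range_succ (fun x => F (2*x)) k]
    ring

-- pointwise even binomial identity
lemma even_binom_identity (s t : ℝ) (k : ℕ) :
    ((s + t)^(2*k) + (s - t)^(2*k)) / 2
      = ∑ j ∈ range (k+1), (Nat.choose (2*k) (2*j) : ℝ) * (s^(2*(k-j)) * t^(2*j)) := by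
  have h1 : (s + t)^(2*k) = ∑ i ∈ range (2*k+1), t^i * s^(2*k - i) * (Nat.choose (2*k) i : ℝ) := by
    rw [add_comm s t, add_pow]
  have h2 : (s - t)^(2*k) = ∑ i ∈ range (2*k+1), (-t)^i * s^(2*k - i) * (Nat.choose (2*k) i : ℝ) := by
    rw [show s - t = -t + s by ring, add_pow]
  rw [h1, h2, ← Finset.sum_add_distrib]
  have h3 : ∀ i ∈ range (2*k+1),
      (t^i * s^(2*k-i) * (Nat.choose (2*k) i : ℝ) + (-t)^i * s^(2*k-i) * (Nat.choose (2*k) i : ℝ))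
      = 2 * (if Even i then (Nat.choose (2*k) i : ℝ) * (s^(2*k-i) * t^i) else 0) := by
    intro i _
    by_cases h : Even i
    · rw [h.neg_pow, if_pos h]; ring
    · rw [(Nat.odd_iff.2 (Nat.not_even_iff.1 h)).neg_pow, if_neg h]; ring
  rw [Finset.sum_congr rfl h3, ← Finset.mul_sum]
  have h4 : ∀ i : ℕ, (if Even i then (Nat.choose (2*k) i : ℝ) * (s^(2*k-i) * t^i) else 0)
      = (if Even i then (fun i => (Nat.choose (2*k) i : ℝ) * (s^(2*k-i) * t^i)) i else 0) :=
    fun i => rfl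
  rw [sum_even_range k (fun i => (Nat.choose (2*k) i : ℝ) * (s^(2*k-i) * t^i))]
  have h5 : ∀ j ∈ range (k+1), ((2*k).choose (2*j) : ℝ) * (s^(2*k-2*j) * t^(2*j))
      = ((2*k).choose (2*j) : ℝ) * (s^(2*(k-j)) * t^(2*j)) := by
    intro j hj
    have : 2*k - 2*j = 2*(k-j) := by omega
    rw [this]
  rw [Finset.sum_congr rfl h5]
  ring

def Ex (n : ℕ) (h : (Fin n → Bool) → ℝ) : ℝ := (∑ x, h x) / 2^n

lemma Ex_nonneg {n : ℕ} {h : (Fin n → Bool) → ℝ} (hh : ∀ x, 0 ≤ h x) : 0 ≤ Ex n h :=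
  div_nonneg (Finset.sum_nonneg fun x _ => hh x) (by positivity)

lemma Ex_mono {n : ℕ} {f g : (Fin n → Bool) → ℝ} (h : ∀ x, f x ≤ g x) : Ex n f ≤ Ex n g := by
  unfold Ex
  have h2 : (0:ℝ) < 2^n := by positivity
  exact (div_le_div_iff_of_pos_right h2).2 (Finset.sum_le_sum fun i _ => h i)

lemma Ex_add {n : ℕ} (f g : (Fin n → Bool) → ℝ) :
    Ex n (fun x => f x + g x) = Ex n f + Ex n g := by
  unfold Ex
  rw [Finset.sum_add_distrib, add_div]

lemma Ex_const_mul {n : ℕ} (c : ℝ) (f : (Fin n → Bool) → ℝ) :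
    Ex n (fun x => c * f x) = c * Ex n f := by
  unfold Ex
  rw [← Finset.mul_sum, mul_div_assoc]

lemma Ex_sum {n : ℕ} {ι : Type*} (s : Finset ι) (F : ι → (Fin n → Bool) → ℝ) :
    Ex n (fun x => ∑ j ∈ s, F j x) = ∑ j ∈ s, Ex n (F j) := by
  unfold Ex
  rw [Finset.sum_comm, Finset.sum_div]

lemma Ex_congr {n : ℕ} {f g : (Fin n → Bool) → ℝ} (h : ∀ x, f x = g x) : Ex n f = Ex n g := by
  unfold Ex
  rw [Finset.sum_congr rfl fun x _ => h x]

lemma Ex_succ {n : ℕ} (F : (Fin (n+1) → Bool) → ℝ) :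
    Ex (n+1) F = (Ex n (fun x => F (Fin.cons false x)) + Ex n (fun x => F (Fin.cons true x))) / 2 := by
  unfold Ex
  rw [sum_cube_succ, Finset.sum_add_distrib]
  rw [pow_succ]
  field_simp

lemma Ex_holder {n : ℕ} (f g : (Fin n → Bool) → ℝ) (hf : ∀ x, 0 ≤ f x) (hg : ∀ x, 0 ≤ g x)
    {j k : ℕ} (h0 : 0 < j) (hjk : j < k) :
    Ex n (fun x => f x ^ (k - j) * g x ^ j)
      ≤ Ex n (fun x => f x ^ k) ^ (((k - j : ℕ) : ℝ)/k) * Ex n (fun x => g x ^ k) ^ ((j:ℝ)/k) := by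
  have hk0 : (0:ℝ) < k := by exact_mod_cast h0.trans hjk
  have hkj : (0:ℝ) < ((k - j : ℕ) : ℝ) := by
    have : 0 < k - j := by omega
    exact_mod_cast this
  have hcast : ((k - j : ℕ) : ℝ) = (k : ℝ) - j := Nat.cast_sub hjk.le
  set p : ℝ := (k : ℝ) / ((k - j : ℕ) : ℝ) with hp
  set q : ℝ := (k : ℝ) / (j : ℝ) with hq
  have hj0 : (0:ℝ) < j := by exact_mod_cast h0
  have hpq : p.HolderConjugate q := by
    rw [Real.holderConjugate_iff]
    constructor
    · rw [hp, lt_div_iff₀ hkj, hcast]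
      linarith
    · rw [hp, hq, inv_div, inv_div, hcast]
      field_simp
      ring
  have H := Real.inner_le_Lp_mul_Lq Finset.univ (fun x => f x ^ (k - j)) (fun x => g x ^ j) hpq
  have habs1 : ∀ x : Fin n → Bool, |f x ^ (k - j)| ^ p = f x ^ k := by
    intro x
    rw [abs_of_nonneg (pow_nonneg (hf x) _), ← Real.rpow_natCast (f x) (k - j),
      ← Real.rpow_mul (hf x), hp]
    rw [show ((k - j : ℕ) : ℝ) * ((k:ℝ) / ((k - j : ℕ) : ℝ)) = (k:ℝ) by field_simp]
    rw [Real.rpow_natCast]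
  have habs2 : ∀ x : Fin n → Bool, |g x ^ j| ^ q = g x ^ k := by
    intro x
    rw [abs_of_nonneg (pow_nonneg (hg x) _), ← Real.rpow_natCast (g x) j,
      ← Real.rpow_mul (hg x), hq]
    rw [show (j : ℝ) * ((k:ℝ) / (j : ℝ)) = (k:ℝ) by field_simp]
    rw [Real.rpow_natCast]
  simp only [habs1, habs2] at H
  have h2n : (0:ℝ) < 2^n := by positivity
  have hsumf : (0:ℝ) ≤ ∑ x, f x ^ k := Finset.sum_nonneg fun x _ => pow_nonneg (hf x) _
  have hsumg : (0:ℝ) ≤ ∑ x, g x ^ k := Finset.sum_nonneg fun x _ => pow_nonneg (hg x) _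
  have hsplit : (2:ℝ)^n = ((2:ℝ)^n) ^ (1/p) * ((2:ℝ)^n) ^ (1/q) := by
    rw [← Real.rpow_add h2n, one_div, one_div, hpq.inv_add_inv_eq_one, Real.rpow_one]
  have expand : (∑ x, f x ^ k) ^ (1/p) * (∑ x, g x ^ k) ^ (1/q)
      = ((∑ x, f x ^ k) / 2^n) ^ (1/p) * ((∑ x, g x ^ k) / 2^n) ^ (1/q) * 2^n := by
    rw [Real.div_rpow hsumf (le_of_lt h2n), Real.div_rpow hsumg (le_of_lt h2n)]
    nth_rewrite 3 [hsplit]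
    field_simp
  have hfin : (∑ x, f x ^ (k-j) * g x ^ j)
      ≤ ((∑ x, f x ^ k) / 2^n) ^ (1/p) * ((∑ x, g x ^ k) / 2^n) ^ (1/q) * 2^n := by
    rw [← expand]; exact H
  have hpe : 1/p = ((k-j:ℕ):ℝ)/k := by rw [hp, one_div_div]
  have hqe : 1/q = (j:ℝ)/k := by rw [hq, one_div_div]
  unfold Ex
  rw [div_le_iff₀ h2n, ← hpe, ← hqe]
  exact hfin

lemma Ex_zero_fun {n : ℕ} : Ex n (fun _ => (0:ℝ)) = 0 := by
  unfold Ex; simp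

theorem hyper (n : ℕ) : ∀ (g : (Fin n → Bool) → ℝ) (d k : ℕ), 1 ≤ k → Deg n g d →
    Ex n (fun x => g x ^ (2*k)) ≤ ((2*k-1 : ℕ) : ℝ)^(d*k) * Ex n (fun x => g x ^ 2) ^ k := by
  induction n with
  | zero =>
    intro g d k hk _
    have e : ∀ F : (Fin 0 → Bool) → ℝ, Ex 0 F = F (fun i => i.elim0) := by
      intro F
      unfold Ex
      rw [pow_zero, div_one]
      exact Fintype.sum_subsingleton _ _
    rw [e, e, ← pow_mul]
    have h1 : (1:ℝ) ≤ ((2*k-1 : ℕ) : ℝ)^(d*k) := by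
      have hb : (1:ℝ) ≤ ((2*k-1 : ℕ) : ℝ) := by
        have : 1 ≤ 2*k-1 := by omega
        exact_mod_cast this
      exact one_le_pow₀ hb
    have h2 : (0:ℝ) ≤ (g (fun i => i.elim0) ^ 2) ^ k := by positivity
    rw [← pow_mul] at h2
    exact le_mul_of_one_le_left h2 h1
  | succ n ih =>
    rintro g d k hk ⟨u, v, hu0, hv0, hgx⟩
    have hgf : ∀ x, g (Fin.cons false x) = u x + v x := by
      intro x; rw [hgx]; norm_num
    have hgt : ∀ x, g (Fin.cons true x) = u x - v x := by
      intro x; rw [hgx]; ring_nf; norm_num; ring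
    set U := Ex n (fun x => u x ^ 2) with hUdef
    set V := Ex n (fun x => v x ^ 2) with hVdef
    have hU : 0 ≤ U := Ex_nonneg fun x => sq_nonneg _
    have hV : 0 ≤ V := Ex_nonneg fun x => sq_nonneg _
    have E2 : Ex (n+1) (fun x => g x ^ 2) = U + V := by
      rw [Ex_succ]
      have e : Ex n (fun x => g (Fin.cons false x) ^ 2) + Ex n (fun x => g (Fin.cons true x) ^ 2)
          = 2 * (U + V) := by
        rw [← Ex_add]
        have e2 : (fun x => g (Fin.cons false x) ^2 + g (Fin.cons true x)^2)
            = (fun x => 2 * (u x^2 + v x^2)) := funext fun x => by rw [hgf, hgt]; ring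
        rw [e2, Ex_const_mul, Ex_add, hUdef, hVdef]
      rw [e]; ring
    set a : ℕ → ℝ := fun j => Ex n (fun x => (u x ^ 2)^(k - j) * (v x ^2)^j) with hadef
    have E2k : Ex (n+1) (fun x => g x ^ (2*k))
        = ∑ j ∈ Finset.range (k+1), (Nat.choose (2*k) (2*j):ℝ) * a j := by
      rw [Ex_succ]
      have e : Ex n (fun x => g (Fin.cons false x) ^ (2*k)) + Ex n (fun x => g (Fin.cons true x) ^ (2*k))
          = 2 * ∑ j ∈ Finset.range (k+1), (Nat.choose (2*k) (2*j):ℝ) * a j := by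
        rw [← Ex_add]
        have e2 : (fun x => g (Fin.cons false x) ^ (2*k) + g (Fin.cons true x) ^ (2*k))
            = (fun x => 2 * ∑ j ∈ Finset.range (k+1),
                (Nat.choose (2*k) (2*j):ℝ) * ((u x ^ 2)^(k - j) * (v x ^2)^j)) := by
          funext x
          have hid := even_binom_identity (u x) (v x) k
          have hid2 : ((u x + v x)^(2*k) + (u x - v x)^(2*k))/2
              = ∑ j ∈ Finset.range (k+1),
                  (Nat.choose (2*k) (2*j):ℝ) * ((u x ^ 2)^(k - j) * (v x ^2)^j) := by
            rw [hid]
            refine Finset.sum_congr rfl fun j hj => ?_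
            rw [pow_mul, pow_mul]
          rw [hgf, hgt, ← hid2]
          ring
        rw [e2, Ex_const_mul, Ex_sum]
        congr 1
        refine Finset.sum_congr rfl fun j hj => ?_
        rw [Ex_const_mul]
      rw [e]; ring
    rcases hv0 with ⟨rfl, hveq⟩ | ⟨d', rfl, hv1⟩
    · -- d = 0, v = 0
      have hvz : ∀ x, v x = 0 := fun x => congrFun hveq x
      have hV0 : V = 0 := by
        rw [hVdef]
        rw [Ex_congr (fun x => by rw [hvz x]; norm_num : ∀ x, v x ^ 2 = (fun _ => (0:ℝ)) x)]
        exact Ex_zero_fun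
      have egk : Ex (n+1) (fun x => g x ^ (2*k)) = Ex n (fun x => u x ^ (2*k)) := by
        rw [Ex_succ]
        have e1 : (fun x => g (Fin.cons false x) ^ (2*k)) = fun x => u x ^ (2*k) :=
          funext fun x => by rw [hgf, hvz]; ring_nf
        have e2 : (fun x => g (Fin.cons true x) ^ (2*k)) = fun x => u x ^ (2*k) :=
          funext fun x => by rw [hgt, hvz]; ring_nf
        rw [e1, e2]; ring
      rw [egk, E2, hV0, add_zero]
      exact ih u 0 k hk hu0
    · -- main case
      have hiu := ih u (d'+1) k hk hu0
      have hiv := ih v d' k hk hv1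
      set C : ℝ := ((2*k-1 : ℕ) : ℝ) with hCdef
      have hC0 : (0:ℝ) ≤ C := Nat.cast_nonneg _
      set P : ℝ := C^(d'+1) * U with hPdef
      set Q : ℝ := C^(d') * V with hQdef
      have hP : 0 ≤ P := mul_nonneg (pow_nonneg hC0 _) hU
      have hQ : 0 ≤ Q := mul_nonneg (pow_nonneg hC0 _) hV
      have hB0 : Ex n (fun x => (u x ^ 2)^k) ≤ P^k := by
        have e : (fun x => (u x ^ 2)^k) = fun x => u x ^ (2*k) := funext fun x => by rw [← pow_mul]
        rw [e, hPdef, mul_pow, ← pow_mul]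
        exact hiu
      have hB1 : Ex n (fun x => (v x ^ 2)^k) ≤ Q^k := by
        have e : (fun x => (v x ^ 2)^k) = fun x => v x ^ (2*k) := funext fun x => by rw [← pow_mul]
        rw [e, hQdef, mul_pow, ← pow_mul]
        exact hiv
      have hB0nn : 0 ≤ Ex n (fun x => (u x ^ 2)^k) := Ex_nonneg fun x => pow_nonneg (sq_nonneg _) _
      have hB1nn : 0 ≤ Ex n (fun x => (v x ^ 2)^k) := Ex_nonneg fun x => pow_nonneg (sq_nonneg _) _
      have key : ∀ j ∈ Finset.range (k+1), a j ≤ P^(k-j) * Q^j := by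
        intro j hj
        rw [Finset.mem_range] at hj
        have hjk : j ≤ k := by omega
        rcases Nat.eq_zero_or_pos j with rfl | hjpos
        · have e : a 0 = Ex n (fun x => (u x ^ 2)^k) := by
            rw [hadef]
            exact Ex_congr fun x => by norm_num
          rw [e]
          simpa using hB0
        rcases eq_or_lt_of_le hjk with rfl | hjlt
        · have e : a j = Ex n (fun x => (v x ^ 2)^j) := by
            rw [hadef]
            exact Ex_congr fun x => by simp
          rw [e]
          simpa using hB1
        · -- 0 < j < k : Hölder
          have hH := Ex_holder (fun x => u x ^ 2) (fun x => v x ^ 2)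
            (fun x => sq_nonneg _) (fun x => sq_nonneg _) hjpos hjlt
          have hexp1 : Ex n (fun x => (u x ^ 2)^k) ^ (((k - j:ℕ):ℝ)/k) ≤ P^(k-j) := by
            have h1 := Real.rpow_le_rpow hB0nn hB0 (by positivity : (0:ℝ) ≤ ((k - j:ℕ):ℝ)/k)
            refine h1.trans (le_of_eq ?_)
            rw [← Real.rpow_natCast P k, ← Real.rpow_mul hP]
            rw [show (k:ℝ) * (((k - j:ℕ):ℝ)/k) = ((k - j:ℕ):ℝ) by
              field_simp]
            rw [Real.rpow_natCast]
          have hexp2 : Ex n (fun x => (v x ^ 2)^k) ^ ((j:ℝ)/k) ≤ Q^j := by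
            have h1 := Real.rpow_le_rpow hB1nn hB1 (by positivity : (0:ℝ) ≤ (j:ℝ)/k)
            refine h1.trans (le_of_eq ?_)
            rw [← Real.rpow_natCast Q k, ← Real.rpow_mul hQ]
            rw [show (k:ℝ) * ((j:ℝ)/k) = ((j:ℕ):ℝ) by
              have : (0:ℝ) < k := by positivity
              field_simp]
            rw [Real.rpow_natCast]
          refine hH.trans ?_
          exact mul_le_mul hexp1 hexp2 (Real.rpow_nonneg hB1nn _) (pow_nonneg hP _)
      rw [E2k, E2]
      have step : ∀ j ∈ Finset.range (k+1),
          (Nat.choose (2*k) (2*j):ℝ) * a j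
            ≤ (Nat.choose k j : ℝ) * C^((d'+1)*k) * (U^(k-j) * V^j) := by
        intro j hj
        rw [Finset.mem_range] at hj
        have hjk : j ≤ k := by omega
        obtain ⟨m, rfl⟩ : ∃ m, k = j + m := ⟨k - j, by omega⟩
        have hkj : (j + m) - j = m := by omega
        have ha := key j (Finset.mem_range.2 hj)
        have hann : 0 ≤ (Nat.choose (2*(j+m)) (2*j):ℝ) := Nat.cast_nonneg _
        calc (Nat.choose (2*(j+m)) (2*j):ℝ) * a j
            ≤ (Nat.choose (2*(j+m)) (2*j):ℝ) * (P^((j+m)-j) * Q^j) :=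
              mul_le_mul_of_nonneg_left ha hann
          _ ≤ ((Nat.choose (j+m) j : ℝ) * C^j) * (P^((j+m)-j) * Q^j) := by
              refine mul_le_mul_of_nonneg_right ?_
                (mul_nonneg (pow_nonneg hP _) (pow_nonneg hQ _))
              have hnat := choose_two_mul_le (j+m) j (by omega)
              calc (Nat.choose (2*(j+m)) (2*j):ℝ)
                  ≤ ((Nat.choose (j+m) j * (2*(j+m)-1)^j : ℕ) : ℝ) := Nat.cast_le.2 hnat
                _ = (Nat.choose (j+m) j : ℝ) * C^j := by
                    rw [Nat.cast_mul, Nat.cast_pow, ← hCdef]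
          _ = (Nat.choose (j+m) j : ℝ) * C^((d'+1)*(j+m)) * (U^((j+m)-j) * V^j) := by
              rw [hkj, hPdef, hQdef]
              rw [mul_pow, mul_pow, ← pow_mul, ← pow_mul,
                show (d'+1)*(j+m) = j + ((d'+1)*m + d'*j) from by ring, pow_add, pow_add]
              ring
      calc ∑ j ∈ Finset.range (k+1), (Nat.choose (2*k) (2*j):ℝ) * a j
          ≤ ∑ j ∈ Finset.range (k+1),
              (Nat.choose k j : ℝ) * C^((d'+1)*k) * (U^(k-j) * V^j) :=
            Finset.sum_le_sum step
        _ = C^((d'+1)*k) * (U+V)^k := by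
            rw [show U + V = V + U from add_comm U V, add_pow, Finset.mul_sum]
            refine Finset.sum_congr rfl fun j hj => by ring

lemma choose_le_aux (m : ℕ) : ∀ i r : ℕ, i ≤ r → r ≤ m →
    Nat.choose r i * m^i ≤ Nat.choose m i * r^i := by
  intro i
  induction i with
  | zero => intro r _ _; simp
  | succ i ih =>
    intro r hir hrm
    have IH := ih r (by omega) hrm
    have h1 : Nat.choose r (i+1) * (i+1) = Nat.choose r i * (r - i) :=
      Nat.choose_succ_right_eq r i
    have h2 : Nat.choose m (i+1) * (i+1) = Nat.choose m i * (m - i) :=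
      Nat.choose_succ_right_eq m i
    refine Nat.le_of_mul_le_mul_right ?_ (by omega : 0 < i+1)
    have e1 : Nat.choose r (i+1) * m^(i+1) * (i+1) = (Nat.choose r i * m^i) * ((r - i) * m) := by
      calc Nat.choose r (i+1) * m^(i+1) * (i+1)
          = (Nat.choose r (i+1) * (i+1)) * m^(i+1) := by ring
        _ = (Nat.choose r i * (r - i)) * m^(i+1) := by rw [h1]
        _ = (Nat.choose r i * m^i) * ((r - i) * m) := by rw [pow_succ]; ring
    have e2 : Nat.choose m (i+1) * r^(i+1) * (i+1) = (Nat.choose m i * r^i) * ((m - i) * r) := by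
      calc Nat.choose m (i+1) * r^(i+1) * (i+1)
          = (Nat.choose m (i+1) * (i+1)) * r^(i+1) := by ring
        _ = (Nat.choose m i * (m - i)) * r^(i+1) := by rw [h2]
        _ = (Nat.choose m i * r^i) * ((m - i) * r) := by rw [pow_succ]; ring
    rw [e1, e2]
    refine Nat.mul_le_mul IH ?_
    have hx : i * r ≤ i * m := Nat.mul_le_mul_left i hrm
    have e3 : (r - i) * m = r*m - i*m := by
      rw [Nat.sub_mul]
    have e4 : (m - i) * r = m*r - i*r := by
      rw [Nat.sub_mul]
    rw [e3, e4]
    have hcm : r*m = m*r := Nat.mul_comm r m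
    omega

lemma two_pow_mul_le (m r : ℕ) (h : r ≤ m) : 2^r * m^m ≤ (m+r)^m := by
  have hexp : (m+r)^m = ∑ i ∈ Finset.range (m+1), r^i * m^(m-i) * Nat.choose m i := by
    rw [add_comm m r, add_pow]
    norm_cast
  rw [hexp]
  have hsub : Finset.range (r+1) ⊆ Finset.range (m+1) := by
    intro i hi
    simp only [Finset.mem_range] at *
    omega
  have h1 : ∑ i ∈ Finset.range (r+1), r^i * m^(m-i) * Nat.choose m i
      ≤ ∑ i ∈ Finset.range (m+1), r^i * m^(m-i) * Nat.choose m i :=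
    Finset.sum_le_sum_of_subset hsub
  refine le_trans ?_ h1
  have h2 : ∀ i ∈ Finset.range (r+1),
      Nat.choose r i * m^m ≤ r^i * m^(m-i) * Nat.choose m i := by
    intro i hi
    rw [Finset.mem_range] at hi
    have hir : i ≤ r := by omega
    have haux := choose_le_aux m i r hir h
    calc Nat.choose r i * m^m = Nat.choose r i * m^i * m^(m-i) := by
          rw [mul_assoc, ← pow_add]
          congr 2
          omega
      _ ≤ Nat.choose m i * r^i * m^(m-i) := Nat.mul_le_mul_right _ haux
      _ = r^i * m^(m-i) * Nat.choose m i := by ring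
  calc 2^r * m^m = (∑ i ∈ Finset.range (r+1), Nat.choose r i) * m^m := by
        rw [Nat.sum_range_choose]
    _ = ∑ i ∈ Finset.range (r+1), Nat.choose r i * m^m := by rw [Finset.sum_mul]
    _ ≤ ∑ i ∈ Finset.range (r+1), r^i * m^(m-i) * Nat.choose m i := Finset.sum_le_sum h2

lemma exists_k : ∀ c q : ℕ, 1 ≤ q → q ≤ c → ∃ k, 1 ≤ k ∧ q*k ≤ c ∧ c ≤ 2*(q*k) := by
  intro c
  induction c using Nat.strong_induction_on with
  | _ c ih =>
    intro q hq hqc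
    by_cases h : c ≤ 2*q
    · refine ⟨1, le_rfl, ?_, ?_⟩ <;> rw [Nat.mul_one] <;> omega
    · push_neg at h
      rcases le_or_gt q (c - 2*q) with h2 | h2
      · obtain ⟨k, hk1, hk2, hk3⟩ := ih (c - 2*q) (by omega) q hq h2
        refine ⟨k+1, by omega, ?_, ?_⟩
        · rw [Nat.mul_succ]
          omega
        · rw [Nat.mul_succ]
          omega
      · refine ⟨2, by omega, ?_, ?_⟩ <;> omega

/-- Normalized Fourier coefficient of (the indicator of) `A ⊆ {0,1}^n`:
`f̃(z) = (1/|A|) ∑_{x ∈ A} (-1)^{z·x}`. -/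
def ftilde {n : ℕ} (A : Finset (Fin n → Bool)) (z : Fin n → Bool) : ℝ :=
  (1 / A.card) * ∑ x ∈ A, chi z x

set_option maxHeartbeats 1000000 in
/-- Lemma F.3 of KapralovK19 (`xorKKL`): if `|A| ≥ 2^{n-c}` then for every `y` and
every `1 ≤ q ≤ c`, `∑_{|x ⊕ y| = q} f̃(x)² ≤ (4c/q)^q`. -/
theorem stmt1 (n c : ℕ) (hn : 0 < n) (hc : 0 < c)
    (A : Finset (Fin n → Bool)) (hA : (2 : ℝ) ^ n ≤ A.card * 2 ^ c)
    (y : Fin n → Bool) (q : ℕ) (hq1 : 1 ≤ q) (hq2 : q ≤ c) :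
    ∑ x ∈ Finset.univ.filter
        (fun x : Fin n → Bool => hw (fun i => xor (x i) (y i)) = q),
      ftilde A x ^ 2 ≤ ((4 * c : ℝ) / q) ^ q := by
  classical
  obtain ⟨k, hk1, hqk1, hqk2⟩ := exists_k c q hq1 hq2
  have hA0 : 0 < A.card := by
    by_contra hcon
    push_neg at hcon
    have : A.card = 0 := by omega
    rw [this] at hA
    norm_num at hA
    have hpos : (0:ℝ) < 2^n := by positivity
    linarith
  have hcard0 : (0:ℝ) < A.card := by exact_mod_cast hA0
  set T := Finset.univ.filter
    (fun x : Fin n → Bool => hw (fun i => xor (x i) (y i)) = q) with hTdef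
  set S : (Fin n → Bool) → ℝ := fun z => ∑ a ∈ A, chi z a with hSdef
  set W := ∑ z ∈ T, (S z)^2 with hWdef
  have hWnn : 0 ≤ W := Finset.sum_nonneg fun z _ => sq_nonneg _
  have tsum : ∑ x ∈ T, ftilde A x ^ 2 = W / (A.card:ℝ)^2 := by
    rw [hWdef, Finset.sum_div]
    refine Finset.sum_congr rfl fun z _ => ?_
    rw [ftilde, mul_pow]
    rw [div_pow, one_pow]
    rw [div_mul_eq_mul_div, one_mul]
  set g : (Fin n → Bool) → ℝ := fun x => ∑ z ∈ T, S z * chi z x with hgdef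
  set h : (Fin n → Bool) → ℝ := fun x => ∑ z ∈ T, S z * chi (fun i => xor (z i) (y i)) x with hhdef
  have hgh : ∀ x, g x = chi y x * h x := by
    intro x
    rw [hgdef, hhdef]
    simp only
    rw [Finset.mul_sum]
    refine Finset.sum_congr rfl fun z hz => ?_
    have e : chi y x * chi (fun i => xor (z i) (y i)) x = chi z x := by
      rw [chi_mul_chi]
      congr 1
      funext i
      cases z i <;> cases y i <;> rfl
    rw [← e]
    ring
  have hg2 : ∀ x, g x ^ 2 = h x ^ 2 := by
    intro x
    rw [hgh, mul_pow, chi_sq, one_mul]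
  have hg2k : ∀ x, g x ^ (2*k) = h x ^ (2*k) := by
    intro x
    rw [hgh, mul_pow, pow_mul, chi_sq, one_pow, one_mul]
  have hdeg : Deg n h q := by
    rw [hhdef]
    refine deg_sum T _ q fun z hz => ?_
    have hzT : hw (fun i => xor (z i) (y i)) = q := (Finset.mem_filter.1 hz).2
    have hd := deg_chi n (fun i => xor (z i) (y i))
    rw [hzT] at hd
    exact deg_smul n (S z) _ q hd
  have F1 : ∑ x ∈ A, g x = W := by
    rw [hgdef, hWdef]
    simp only
    rw [Finset.sum_comm]
    refine Finset.sum_congr rfl fun z _ => ?_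
    rw [← Finset.mul_sum, sq]
  have F2 : ∑ x, g x ^ 2 = 2^n * W := by
    have e1 : ∀ x, g x ^2 = ∑ z ∈ T, ∑ w ∈ T, (S z * S w) * (chi z x * chi w x) := by
      intro x
      rw [hgdef]
      simp only
      rw [sq, Finset.sum_mul_sum]
      exact Finset.sum_congr rfl fun z _ => Finset.sum_congr rfl fun w _ => by ring
    rw [Finset.sum_congr rfl fun x _ => e1 x]
    rw [Finset.sum_comm]
    have e2 : ∀ z ∈ T, ∑ x, ∑ w ∈ T, (S z * S w) * (chi z x * chi w x)
        = (2:ℝ)^n * S z ^2 := by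
      intro z hz
      rw [Finset.sum_comm]
      have e3 : ∀ w ∈ T, ∑ x, (S z * S w) * (chi z x * chi w x)
          = (S z * S w) * (if z = w then (2:ℝ)^n else 0) := by
        intro w _
        rw [← Finset.mul_sum, sum_chi_mul_chi]
      rw [Finset.sum_congr rfl e3]
      rw [Finset.sum_eq_single_of_mem z hz]
      · rw [if_pos rfl]; ring
      · intro w _ hwz
        rw [if_neg (Ne.symm hwz), mul_zero]
    rw [Finset.sum_congr rfl e2, ← Finset.mul_sum, ← hWdef]
  have Eh2 : Ex n (fun x => h x ^ 2) = W := by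
    unfold Ex
    rw [Finset.sum_congr rfl fun x _ => (hg2 x).symm, F2]
    field_simp
  set C : ℝ := ((2*k-1 : ℕ) : ℝ) with hCdef
  have hC0 : (0:ℝ) ≤ C := Nat.cast_nonneg _
  have hhyp := hyper n h q k hk1 hdeg
  rw [Eh2] at hhyp
  -- Jensen + chain
  have habs : ∀ x : Fin n → Bool, |g x| ^ (2*k) = g x ^ (2*k) := by
    intro x
    rw [pow_mul, sq_abs, ← pow_mul]
  have jensen : (∑ x ∈ A, g x)^(2*k) ≤ (A.card:ℝ)^(2*k-1) * ∑ x ∈ A, g x ^ (2*k) := by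
    have e0 : (∑ x ∈ A, g x)^(2*k) ≤ (∑ x ∈ A, |g x|)^(2*k) := by
      rw [pow_mul, pow_mul]
      refine pow_le_pow_left₀ (sq_nonneg _) ?_ k
      have hb1 : ∑ x ∈ A, g x ≤ ∑ x ∈ A, |g x| := Finset.sum_le_sum fun x _ => le_abs_self _
      have hb2 : -(∑ x ∈ A, |g x|) ≤ ∑ x ∈ A, g x := by
        rw [← Finset.sum_neg_distrib]
        exact Finset.sum_le_sum fun x _ => neg_abs_le _
      exact sq_le_sq' hb2 hb1
    have e1 := pow_sum_div_card_le_sum_pow (s := A) (f := fun x => |g x|)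
      (fun x _ => abs_nonneg _) (2*k-1)
    have e2 : 2*k-1+1 = 2*k := by omega
    rw [e2] at e1
    rw [div_le_iff₀ (by positivity)] at e1
    calc (∑ x ∈ A, g x)^(2*k) ≤ (∑ x ∈ A, |g x|)^(2*k) := e0
      _ ≤ (∑ x ∈ A, |g x| ^ (2*k)) * (A.card:ℝ)^(2*k-1) := e1
      _ = (A.card:ℝ)^(2*k-1) * ∑ x ∈ A, g x ^ (2*k) := by
          rw [Finset.sum_congr rfl fun x _ => habs x]
          ring
  have subsum : ∑ x ∈ A, g x ^ (2*k) ≤ ∑ x, g x ^ (2*k) := by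
    refine Finset.sum_le_sum_of_subset_of_nonneg (Finset.subset_univ A) fun x _ _ => ?_
    rw [pow_mul]
    exact pow_nonneg (sq_nonneg _) k
  have totsum : ∑ x, g x ^ (2*k) ≤ 2^n * (C^(q*k) * W^k) := by
    have e : ∑ x, g x ^ (2*k) = 2^n * Ex n (fun x => h x ^ (2*k)) := by
      unfold Ex
      rw [Finset.sum_congr rfl fun x _ => hg2k x]
      field_simp
    rw [e]
    refine mul_le_mul_of_nonneg_left ?_ (by positivity)
    exact hhyp
  have main : W^(2*k) ≤ ((A.card:ℝ)^(2*k-1) * (2^n * C^(q*k))) * W^k := by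
    calc W^(2*k) = (∑ x ∈ A, g x)^(2*k) := by rw [F1]
      _ ≤ (A.card:ℝ)^(2*k-1) * ∑ x ∈ A, g x ^ (2*k) := jensen
      _ ≤ (A.card:ℝ)^(2*k-1) * ∑ x, g x ^ (2*k) := by
          exact mul_le_mul_of_nonneg_left subsum (by positivity)
      _ ≤ (A.card:ℝ)^(2*k-1) * (2^n * (C^(q*k) * W^k)) := by
          exact mul_le_mul_of_nonneg_left totsum (by positivity)
      _ = ((A.card:ℝ)^(2*k-1) * (2^n * C^(q*k))) * W^k := by ring
  -- final arithmetic
  have hq0 : (0:ℝ) < q := by exact_mod_cast hq1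
  have hc0 : (0:ℝ) < c := by exact_mod_cast hc
  have hk0 : (0:ℝ) < k := by exact_mod_cast hk1
  have hrhs : (0:ℝ) ≤ (4*c:ℝ)/q := by positivity
  rw [tsum]
  rcases eq_or_lt_of_le hWnn with hW0 | hWpos
  · rw [← hW0]
    rw [zero_div]
    positivity
  · have hWk : (0:ℝ) < W^k := pow_pos hWpos k
    have step1 : W^k ≤ (A.card:ℝ)^(2*k-1) * (2^n * C^(q*k)) := by
      have e : W^(2*k) = W^k * W^k := by rw [← pow_add]; congr 1; omega
      rw [e] at main
      exact le_of_mul_le_mul_right main hWk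
    have step2 : W^k ≤ (A.card:ℝ)^(2*k) * (2^c * C^(q*k)) := by
      refine step1.trans ?_
      have e : (A.card:ℝ)^(2*k) = (A.card:ℝ)^(2*k-1) * (A.card:ℝ) := by
        rw [← pow_succ]
        congr 1
        omega
      rw [e]
      calc (A.card:ℝ)^(2*k-1) * (2^n * C^(q*k))
          ≤ (A.card:ℝ)^(2*k-1) * ((A.card * 2^c) * C^(q*k)) := by
            refine mul_le_mul_of_nonneg_left ?_ (by positivity)
            exact mul_le_mul_of_nonneg_right hA (by positivity)
        _ = (A.card:ℝ)^(2*k-1) * (A.card:ℝ) * (2^c * C^(q*k)) := by ring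
    have step3 : (W / (A.card:ℝ)^2)^k ≤ 2^c * C^(q*k) := by
      rw [div_pow, div_le_iff₀ (by positivity), ← pow_mul]
      calc W^k ≤ (A.card:ℝ)^(2*k) * (2^c * C^(q*k)) := step2
        _ = 2^c * C^(q*k) * (A.card:ℝ)^(2*k) := by ring
    -- 2^c * C^(q*k) ≤ (4c/q)^(q*k)
    have hqknat : 0 < q*k := by positivity
    have hqkR : (0:ℝ) < ((q*k:ℕ):ℝ) := by exact_mod_cast hqknat
    have natineq : 2^c * (q*k)^(q*k) ≤ (2*c)^(q*k) := by
      have hle : c - q*k ≤ q*k := by omega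
      have h2p := two_pow_mul_le (q*k) (c - q*k) hle
      have e : q*k + (c - q*k) = c := by omega
      calc 2^c * (q*k)^(q*k) = 2^(q*k) * (2^(c - q*k) * (q*k)^(q*k)) := by
            rw [← mul_assoc, ← pow_add]
            congr 2
            omega
        _ ≤ 2^(q*k) * (q*k + (c - q*k))^(q*k) := Nat.mul_le_mul_left _ h2p
        _ = (2*c)^(q*k) := by rw [e, Nat.mul_pow]
    have realineq : (2:ℝ)^c ≤ ((2*c:ℝ)/((q*k:ℕ):ℝ))^(q*k) := by
      rw [div_pow, le_div_iff₀ (by positivity)]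
      have := natineq
      have cast1 : ((2^c * (q*k)^(q*k) : ℕ) : ℝ) ≤ (((2*c)^(q*k) : ℕ) : ℝ) := Nat.cast_le.2 this
      push_cast at cast1
      push_cast
      exact cast1
    have basele : (2*c:ℝ)/((q*k:ℕ):ℝ) * C ≤ (4*c:ℝ)/q := by
      have hCeq : C = 2*(k:ℝ) - 1 := by
        rw [hCdef]
        have : (1:ℕ) ≤ 2*k := by omega
        push_cast [Nat.cast_sub this]
        ring
      rw [hCeq]
      have hqkcast : ((q*k:ℕ):ℝ) = (q:ℝ)*(k:ℝ) := by push_cast; ring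
      rw [hqkcast, div_mul_eq_mul_div, div_le_div_iff₀ (by positivity) hq0]
      nlinarith [hc0, hq0, hk0]
    have pw : 2^c * C^(q*k) ≤ ((4*c:ℝ)/q)^(q*k) := by
      calc (2:ℝ)^c * C^(q*k) ≤ ((2*c:ℝ)/((q*k:ℕ):ℝ))^(q*k) * C^(q*k) := by
            exact mul_le_mul_of_nonneg_right realineq (by positivity)
        _ = ((2*c:ℝ)/((q*k:ℕ):ℝ) * C)^(q*k) := by rw [mul_pow]
        _ ≤ ((4*c:ℝ)/q)^(q*k) := by
            refine pow_le_pow_left₀ ?_ basele _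
            positivity
    have final : (W / (A.card:ℝ)^2)^k ≤ (((4*c:ℝ)/q)^q)^k := by
      rw [← pow_mul]
      exact step3.trans pw
    exact le_of_pow_le_pow_left₀ (by omega) (by positivity) final
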